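/- arXiv:2205.08100 — 2 statements merged into one kernel-verified Lean document; each statement's English description precedes it below -/
import Mathlib

section
/- Two tuples (α,β,γ,δ,ε,ζ) and (α',β',γ',δ',ε',ζ') in ℂ⁶ with (γ,δ),(ε,ζ),(γ',δ'),(ε',ζ') ≠ (0,0) that lie in the same orbit under the group 𝔊 have the same image [J₂:J₃:J₄:J₅:J₆] in the weighted projective space 𝕎ℙ(2,3,4,5,6), where J₂=α, J₃=β, J₄=γε, J₅=γζ+δε, J₆=δζ. -/
/-- A single generator of the group `𝔊`: either a scaling
`(α,β,γ,δ,ε,ζ) ↦ (t²α, t³β, t⁵γ, t⁶δ, t⁻¹ε, ζ)` with `t ≠ 0`, or the swap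
`(α,β,γ,δ,ε,ζ) ↦ (α,β,ε,ζ,γ,δ)`. -/
def GStep (p q : Fin 6 → ℂ) : Prop :=
  (∃ t : ℂ, t ≠ 0 ∧
    q = ![t ^ 2 * p 0, t ^ 3 * p 1, t ^ 5 * p 2, t ^ 6 * p 3, t⁻¹ * p 4, p 5]) ∨
  q = ![p 0, p 1, p 4, p 5, p 2, p 3]

@[simp] lemma matrix_cons_val_five {α : Type*} (a b c d e f : α) :
    ![a, b, c, d, e, f] 5 = f := rfl

lemma invariants_of_eqvGen (p q : Fin 6 → ℂ) (horb : Relation.EqvGen GStep p q) :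
    ∃ s : ℂ, s ≠ 0 ∧
      q 0 = s ^ 2 * p 0 ∧
      q 1 = s ^ 3 * p 1 ∧
      q 2 * q 4 = s ^ 4 * (p 2 * p 4) ∧
      q 2 * q 5 + q 3 * q 4 = s ^ 5 * (p 2 * p 5 + p 3 * p 4) ∧
      q 3 * q 5 = s ^ 6 * (p 3 * p 5) := by
  induction horb with
  | rel p q h =>
    rcases h with ⟨t, ht, rfl⟩ | rfl
    · refine ⟨t, ht, ?_, ?_, ?_, ?_, ?_⟩ <;>
        (try simp) <;> (try field_simp) <;> (try ring)
    · refine ⟨1, one_ne_zero, ?_, ?_, ?_, ?_, ?_⟩ <;>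
        (try simp) <;> (try ring)
  | refl p => exact ⟨1, one_ne_zero, by simp, by simp, by simp, by simp, by simp⟩
  | symm p q h ih =>
    obtain ⟨s, hs, h0, h1, h2, h3, h4⟩ := ih
    refine ⟨s⁻¹, inv_ne_zero hs, ?_, ?_, ?_, ?_, ?_⟩
    · rw [h0]; field_simp
    · rw [h1]; field_simp
    · rw [h2]; field_simp
    · rw [h3]; field_simp
    · rw [h4]; field_simp
  | trans p q r h1 h2 ih1 ih2 =>
    obtain ⟨s, hs, h0, h1, h2, h3, h4⟩ := ih1
    obtain ⟨u, hu, g0, g1, g2, g3, g4⟩ := ih2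
    exact ⟨u * s, mul_ne_zero hu hs,
      by rw [g0, h0]; ring, by rw [g1, h1]; ring, by rw [g2, h2]; ring,
      by rw [g3, h3]; ring, by rw [g4, h4]; ring⟩

/-- Two tuples in the same `𝔊`-orbit (with the nondegeneracy conditions) have the same
image `[J₂ : J₃ : J₄ : J₅ : J₆]` in the weighted projective space `𝕎ℙ(2,3,4,5,6)`. -/
theorem same_orbit_same_weighted_point (p q : Fin 6 → ℂ)
    (hp₁ : (p 2, p 3) ≠ (0, 0)) (hp₂ : (p 4, p 5) ≠ (0, 0))
    (hq₁ : (q 2, q 3) ≠ (0, 0)) (hq₂ : (q 4, q 5) ≠ (0, 0))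
    (horb : Relation.EqvGen GStep p q) :
    ∃ s : ℂ, s ≠ 0 ∧
      q 0 = s ^ 2 * p 0 ∧
      q 1 = s ^ 3 * p 1 ∧
      q 2 * q 4 = s ^ 4 * (p 2 * p 4) ∧
      q 2 * q 5 + q 3 * q 4 = s ^ 5 * (p 2 * p 5 + p 3 * p 4) ∧
      q 3 * q 5 = s ^ 6 * (p 3 * p 5) :=
  invariants_of_eqvGen p q horb
end

section
/- Under the substitution X = 2uvx, Y = y, Z = 4v⁵(-2εu + ζv)z, W = 2v²x, the quartic Y²ZW - 4X³Z + 3αXZW² + βZW³ + γXZ²W - (1/2)(δZ²W² + ζW⁴) + εXW³ = 0 becomes, after dividing by a suitable monomial factor, the equation y²z = x(x² + A(u,v)xz + B(u,v)z²) with A(u,v) = 4v(4u³ - 3αuv² - βv³) and B(u,v) = 4v⁶(2γu - δv)(2εu - ζv). -/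
/-- Under the substitution `X = 2uvx`, `Y = y`, `Z = 4v⁵(-2εu + ζv)z`, `W = 2v²x`, the
Clingher–Doran quartic becomes, after dividing by the factor `8v⁷x(ζv - 2εu)`, the
equation `y²z = x(x² + A(u,v)xz + B(u,v)z²)` of the alternate fibration. -/
theorem quartic_to_alternate_fibration (α β γ δ ε ζ u v x y z : ℂ) :
    y ^ 2 * (4 * v ^ 5 * (-2 * ε * u + ζ * v) * z) * (2 * v ^ 2 * x)
        - 4 * (2 * u * v * x) ^ 3 * (4 * v ^ 5 * (-2 * ε * u + ζ * v) * z)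
        + 3 * α * (2 * u * v * x) * (4 * v ^ 5 * (-2 * ε * u + ζ * v) * z)
            * (2 * v ^ 2 * x) ^ 2
        + β * (4 * v ^ 5 * (-2 * ε * u + ζ * v) * z) * (2 * v ^ 2 * x) ^ 3
        + γ * (2 * u * v * x) * (4 * v ^ 5 * (-2 * ε * u + ζ * v) * z) ^ 2
            * (2 * v ^ 2 * x)
        - (1 / 2) * (δ * (4 * v ^ 5 * (-2 * ε * u + ζ * v) * z) ^ 2 * (2 * v ^ 2 * x) ^ 2
            + ζ * (2 * v ^ 2 * x) ^ 4)
        + ε * (2 * u * v * x) * (2 * v ^ 2 * x) ^ 3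
      = 8 * v ^ 7 * x * (ζ * v - 2 * ε * u) *
          (y ^ 2 * z
            - x * (x ^ 2
              + (4 * v * (4 * u ^ 3 - 3 * α * u * v ^ 2 - β * v ^ 3)) * x * z
              + (4 * v ^ 6 * (2 * γ * u - δ * v) * (2 * ε * u - ζ * v)) * z ^ 2)) := by
  ring
end
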